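/- An eigenvalue θ of the adjacency matrix of a graph G lies in the eigenvalue support of a vertex i (i.e., E_θ e_i ≠ 0) if and only if (E_θ)_{i,i} > 0, and consequently the eigenvalue support of i is exactly the set of poles of the rational function φ^{G\i}/φ^G. -/

import Mathlib

/-!
Write `A = ∑ θ E_θ` for the spectral decomposition. Since the `E_θ` are complete orthogonal
idempotents, `(X - A)⁻¹ = ∑ E_θ / (X - θ)`, and taking the `(i, i)` entry of the adjugate gives
`φ^{G∖i} / φ^G = ∑_θ (E_θ)_{ii} / (X - θ)`. A simple pole at `θ` survives exactly when
`(E_θ)_{ii} ≠ 0`, and for a symmetric idempotent `(E_θ)_{ii} = ‖E_θ e_i‖²`.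
-/

open Polynomial Matrix Finset

/-- Characteristic polynomial (over ℝ) of the adjacency matrix of the induced subgraph of `G`
obtained by deleting the vertices in `S`. -/
noncomputable def phiDel {V : Type*} [Fintype V] [DecidableEq V]
    (G : SimpleGraph V) [DecidableRel G.Adj] (S : Finset V) : Polynomial ℝ :=
  ((G.adjMatrix ℝ).submatrix (Subtype.val : {v // v ∉ S} → V) Subtype.val).charpoly

/-- The sum, over all paths `P` from `i` to `j` in `G`, of the characteristic polynomial of
the graph obtained from `G` by deleting all vertices of `P`. -/
noncomputable def pathSum {V : Type*} [Fintype V] [DecidableEq V]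
    (G : SimpleGraph V) [DecidableRel G.Adj] (i j : V) : Polynomial ℝ :=
  ∑ P : G.Path i j, phiDel G P.1.support.toFinset

namespace Matrix

section SymmetricIdempotent

variable {n R : Type*} [Fintype n] [Ring R] {E : Matrix n n R}

theorem IsSymm.col_dotProduct_col_of_mul_self (hE : E.IsSymm) (hidem : E * E = E) (i : n) :
    E.col i ⬝ᵥ E.col i = E i i := by
  conv_rhs => rw [← hidem, mul_apply]
  refine Finset.sum_congr rfl fun j _ => ?_
  rw [col_apply, ← hE.apply i j]

variable [DecidableEq n] [LinearOrder R] [IsStrictOrderedRing R]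

theorem IsSymm.mulVec_single_one_eq_zero_iff (hE : E.IsSymm) (hidem : E * E = E) (i : n) :
    E *ᵥ Pi.single i 1 = 0 ↔ E i i = 0 := by
  rw [mulVec_single_one, ← hE.col_dotProduct_col_of_mul_self hidem, dotProduct_self_eq_zero]

theorem IsSymm.mulVec_single_one_ne_zero_iff (hE : E.IsSymm) (hidem : E * E = E) (i : n) :
    E *ᵥ Pi.single i 1 ≠ 0 ↔ 0 < E i i := by
  have hnonneg : 0 ≤ E i i := by
    rw [← hE.col_dotProduct_col_of_mul_self hidem]
    exact Finset.sum_nonneg fun j _ => mul_self_nonneg _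
  rw [Ne, hE.mulVec_single_one_eq_zero_iff hidem, hnonneg.lt_iff_ne']

end SymmetricIdempotent

section Adjugate

variable {m n R : Type*} [Fintype m] [DecidableEq m] [Fintype n] [DecidableEq n] [CommRing R]

theorem adjugate_apply_self (A : Matrix n n R) (i : n) :
    A.adjugate i i = (A.submatrix (Subtype.val : {j // j ≠ i} → n) Subtype.val).det := by
  have hrow : ∀ k, ¬k ≠ i → ∀ j, j ≠ i → A.updateRow i (Pi.single i 1) k j = 0 := by
    intro k hk j hj
    rw [not_not.mp hk, updateRow_self, Pi.single_eq_of_ne hj]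
  have hcorner : ((A.updateRow i (Pi.single i 1)).toSquareBlockProp fun k => ¬k ≠ i).det = 1 := by
    have : Subsingleton {k // ¬k ≠ i} :=
      ⟨fun a b => Subtype.ext ((not_not.mp a.2).trans (not_not.mp b.2).symm)⟩
    rw [det_eq_elem_of_subsingleton _ ⟨i, not_not.mpr rfl⟩]
    simp [toSquareBlockProp_def]
  rw [adjugate_apply, twoBlockTriangular_det _ _ hrow, hcorner, mul_one]
  congr 1
  ext k j
  simp [toSquareBlockProp_def, updateRow_ne k.2]

theorem charmatrix_submatrix {f : m → n} (hf : Function.Injective f) (A : Matrix n n R) :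
    charmatrix (A.submatrix f f) = (charmatrix A).submatrix f f := by
  ext k j
  by_cases h : k = j
  · subst h; simp
  · simp [h, hf.ne h]

theorem adjugate_charmatrix_apply_self (A : Matrix n n R) (i : n) :
    (charmatrix A).adjugate i i =
      (A.submatrix (Subtype.val : {j // j ≠ i} → n) Subtype.val).charpoly := by
  rw [adjugate_apply_self, charpoly, charmatrix_submatrix Subtype.val_injective]

end Adjugate

end Matrix

theorem Finset.sum_smul_mul_sum_smul_of_orthogonal {ι S A : Type*} [CommSemiring S] [Semiring A]
    [Algebra S A] (s : Finset ι) (e : ι → A) (hidem : ∀ a ∈ s, e a * e a = e a)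
    (horth : ∀ a ∈ s, ∀ b ∈ s, a ≠ b → e a * e b = 0) (p q : ι → S) :
    (∑ a ∈ s, p a • e a) * (∑ b ∈ s, q b • e b) = ∑ a ∈ s, (p a * q a) • e a := by
  rw [Finset.sum_mul_sum]
  refine Finset.sum_congr rfl fun a ha => ?_
  rw [Finset.sum_eq_single_of_mem a ha fun b hb hba => by
    rw [smul_mul_smul_comm, horth a ha b hb hba.symm, smul_zero], smul_mul_smul_comm, hidem a ha]

namespace Matrix

variable {n R : Type*} [Fintype n] [DecidableEq n] [CommRing R]
  {Φ : Finset R} {E : R → Matrix n n R} {A : Matrix n n R}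

theorem charmatrix_eq_sum_smul (hdecomp : A = ∑ θ ∈ Φ, θ • E θ) (hsum : ∑ θ ∈ Φ, E θ = 1) :
    charmatrix A = ∑ θ ∈ Φ, (X - C θ) • (C : R →+* R[X]).mapMatrix (E θ) := by
  have hone : ∑ θ ∈ Φ, (C : R →+* R[X]).mapMatrix (E θ) = 1 := by rw [← map_sum, hsum, map_one]
  simp only [sub_smul, Finset.sum_sub_distrib, ← Finset.smul_sum, hone, charmatrix, hdecomp,
    map_sum]
  congr 1
  · rw [scalar_apply, smul_one_eq_diagonal]
  · refine Finset.sum_congr rfl fun θ _ => ?_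
    ext
    simp

theorem charmatrix_mul_resolvent [DecidableEq R] (hdecomp : A = ∑ θ ∈ Φ, θ • E θ)
    (hidem : ∀ θ ∈ Φ, E θ * E θ = E θ)
    (horth : ∀ θ ∈ Φ, ∀ θ' ∈ Φ, θ ≠ θ' → E θ * E θ' = 0) (hsum : ∑ θ ∈ Φ, E θ = 1) :
    charmatrix A * ∑ θ ∈ Φ, (∏ μ ∈ Φ.erase θ, (X - C μ)) • (C : R →+* R[X]).mapMatrix (E θ) =
      (∏ θ ∈ Φ, (X - C θ)) • 1 := by
  rw [charmatrix_eq_sum_smul hdecomp hsum, Finset.sum_smul_mul_sum_smul_of_orthogonal]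
  · have hone : ∑ θ ∈ Φ, (C : R →+* R[X]).mapMatrix (E θ) = 1 := by
      rw [← map_sum, hsum, map_one]
    rw [← hone, Finset.smul_sum]
    exact Finset.sum_congr rfl fun θ hθ => by rw [Finset.mul_prod_erase Φ (fun μ => X - C μ) hθ]
  · intro θ hθ
    rw [← map_mul, hidem θ hθ]
  · intro θ hθ θ' hθ' hne
    rw [← map_mul, horth θ hθ θ' hθ' hne, map_zero]

theorem smul_adjugate_of_mul_eq_smul_one {M B : Matrix n n R} {c : R} (h : M * B = c • 1) :
    c • M.adjugate = M.det • B := by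
  calc c • M.adjugate = M.adjugate * (M * B) := by rw [h, Matrix.mul_smul, Matrix.mul_one]
    _ = M.det • B := by rw [← Matrix.mul_assoc, adjugate_mul, smul_mul, Matrix.one_mul]

theorem prod_X_sub_C_mul_adjugate_charmatrix_apply_self [DecidableEq R]
    (hdecomp : A = ∑ θ ∈ Φ, θ • E θ) (hidem : ∀ θ ∈ Φ, E θ * E θ = E θ)
    (horth : ∀ θ ∈ Φ, ∀ θ' ∈ Φ, θ ≠ θ' → E θ * E θ' = 0) (hsum : ∑ θ ∈ Φ, E θ = 1) (i : n) :
    (∏ θ ∈ Φ, (X - C θ)) * (charmatrix A).adjugate i i =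
      A.charpoly * ∑ θ ∈ Φ, C (E θ i i) * ∏ μ ∈ Φ.erase θ, (X - C μ) := by
  have h := congrFun₂ (smul_adjugate_of_mul_eq_smul_one
    (charmatrix_mul_resolvent hdecomp hidem horth hsum)) i i
  simpa [sum_apply, mul_comm, charpoly] using h

end Matrix

namespace Polynomial

variable {R : Type*} [CommRing R] [DecidableEq R]

theorem eval_sum_C_mul_prod_erase_X_sub_C {s : Finset R} {θ : R} (hθ : θ ∈ s) (c : R → R) :
    (∑ μ ∈ s, C (c μ) * ∏ ν ∈ s.erase μ, (X - C ν)).eval θ = c θ * ∏ ν ∈ s.erase θ, (θ - ν) := by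
  rw [eval_finsetSum, Finset.sum_eq_single_of_mem θ hθ fun μ _ hμθ => ?_]
  · simp [eval_prod]
  · rw [eval_mul, eval_prod, Finset.prod_eq_zero (Finset.mem_erase.mpr ⟨hμθ.symm, hθ⟩), mul_zero]
    simp

variable [IsDomain R]

theorem rootMultiplicity_prod_X_sub_C (s : Finset R) (a : R) :
    rootMultiplicity a (∏ μ ∈ s, (X - C μ)) = if a ∈ s then 1 else 0 := by
  rw [← count_roots, roots_prod_X_sub_C, Multiset.count_eq_of_nodup s.nodup]
  rfl

/-- Here `p / q = g / ∏ μ ∈ s, (X - μ)` with the denominator squarefree, so the poles of `p / q`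
are the points of `s` that are not roots of `g`. -/
theorem rootMultiplicity_lt_iff_of_prod_X_sub_C_mul_eq {s : Finset R} {p q g : R[X]} (hp : p ≠ 0)
    (h : (∏ μ ∈ s, (X - C μ)) * p = q * g) (θ : R) :
    rootMultiplicity θ p < rootMultiplicity θ q ↔ θ ∈ s ∧ ¬g.IsRoot θ := by
  have hfp : (∏ μ ∈ s, (X - C μ)) * p ≠ 0 :=
    mul_ne_zero (monic_prod_of_monic _ _ fun μ _ => monic_X_sub_C μ).ne_zero hp
  have hg : g ≠ 0 := right_ne_zero_of_mul (h ▸ hfp)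
  have hmult := congrArg (rootMultiplicity θ) h
  rw [rootMultiplicity_mul hfp, rootMultiplicity_mul (h ▸ hfp), rootMultiplicity_prod_X_sub_C]
    at hmult
  rw [← rootMultiplicity_pos hg]
  by_cases hθ : θ ∈ s
  · rw [if_pos hθ] at hmult
    simp only [hθ, true_and, not_lt, Nat.le_zero]
    omega
  · rw [if_neg hθ] at hmult
    simp only [hθ, false_and, iff_false, not_lt]
    omega

end Polynomial

section Graph

variable {V : Type*} [Fintype V] [DecidableEq V] (G : SimpleGraph V) [DecidableRel G.Adj]

theorem phiDel_ne_zero (S : Finset V) : phiDel G S ≠ 0 :=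
  (charpoly_monic _).ne_zero

theorem phiDel_empty : phiDel G ∅ = (G.adjMatrix ℝ).charpoly := by
  rw [phiDel, ← charpoly_reindex (Equiv.subtypeUnivEquiv fun v => Finset.notMem_empty v)]
  rfl

theorem phiDel_singleton (i : V) :
    phiDel G {i} =
      ((G.adjMatrix ℝ).submatrix (Subtype.val : {j // j ≠ i} → V) Subtype.val).charpoly := by
  rw [phiDel, ← charpoly_reindex (Equiv.subtypeEquivRight fun _ => Finset.mem_singleton.not)]
  rfl

end Graph

theorem eigenvalue_support_iff_positive_diagonal_and_poles
    {V : Type*} [Fintype V] [DecidableEq V]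
    (G : SimpleGraph V) [DecidableRel G.Adj] (i : V)
    -- spectral decomposition of the adjacency matrix into distinct eigenvalues `Φ`
    -- with orthogonal eigenprojectors `E θ`
    (Φ : Finset ℝ) (E : ℝ → Matrix V V ℝ)
    (hdecomp : G.adjMatrix ℝ = ∑ θ ∈ Φ, θ • E θ)
    (hsym : ∀ θ ∈ Φ, (E θ).IsSymm)
    (hidem : ∀ θ ∈ Φ, E θ * E θ = E θ)
    (horth : ∀ θ ∈ Φ, ∀ θ' ∈ Φ, θ ≠ θ' → E θ * E θ' = 0)
    (hsum : ∑ θ ∈ Φ, E θ = 1) :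
    (∀ θ ∈ Φ, (E θ *ᵥ Pi.single i 1 ≠ 0 ↔ 0 < (E θ) i i)) ∧
    (∀ θ : ℝ, (θ ∈ Φ ∧ E θ *ᵥ Pi.single i 1 ≠ 0) ↔
      Polynomial.rootMultiplicity θ (phiDel G {i}) <
        Polynomial.rootMultiplicity θ (phiDel G ∅)) := by
  have hsupport : ∀ θ ∈ Φ, (E θ *ᵥ Pi.single i 1 ≠ 0 ↔ 0 < (E θ) i i) := fun θ hθ =>
    (hsym θ hθ).mulVec_single_one_ne_zero_iff (hidem θ hθ) i
  refine ⟨hsupport, fun θ => ?_⟩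
  have hresolvent := prod_X_sub_C_mul_adjugate_charmatrix_apply_self hdecomp hidem horth hsum i
  rw [adjugate_charmatrix_apply_self, ← phiDel_singleton, ← phiDel_empty] at hresolvent
  rw [rootMultiplicity_lt_iff_of_prod_X_sub_C_mul_eq (phiDel_ne_zero G {i}) hresolvent]
  refine and_congr_right fun hθ => ?_
  have hnodes : ∏ ν ∈ Φ.erase θ, (θ - ν) ≠ 0 :=
    Finset.prod_ne_zero_iff.mpr fun ν hν => sub_ne_zero.mpr (Finset.ne_of_mem_erase hν).symm
  rw [IsRoot, eval_sum_C_mul_prod_erase_X_sub_C hθ, mul_eq_zero, or_iff_left hnodes,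
    ← (hsym θ hθ).mulVec_single_one_eq_zero_iff (hidem θ hθ)]
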